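/- arXiv:2011.03793 — 4 statements merged into one kernel-verified Lean document; each statement's English description precedes it below -/
import Mathlib

section
/- Assume the form [·,·] is indefinite and let x ∈ H with [x, x] ≠ 0. Then for each real number a with a > |[x, x]|^{1/2} there exists a fundamental symmetry J_a of (H, [·,·]) such that ‖x‖_{J_a} = a. -/
open scoped ComplexOrder

/-- The indefinite (Krein) inner product `[x, y] := ⟪J₀ x, y⟫` induced by the
continuous linear involution `J₀`. -/
noncomputable def kform {H : Type*} [NormedAddCommGroup H] [InnerProductSpace ℂ H]
    (J₀ : H →L[ℂ] H) (x y : H) : ℂ :=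
  inner ℂ (J₀ x) y

/-- `J` is a fundamental symmetry of the Krein space `(H, [·,·])`:
a continuous linear involution, `[·,·]`-selfadjoint, with `[J x, x] > 0` for `x ≠ 0`. -/
def IsFundamentalSymmetry {H : Type*} [NormedAddCommGroup H] [InnerProductSpace ℂ H]
    (J₀ : H →L[ℂ] H) (J : H →L[ℂ] H) : Prop :=
  (∀ x, J (J x) = x) ∧
  (∀ x y, kform J₀ (J x) y = kform J₀ x (J y)) ∧
  (∀ x, x ≠ 0 → 0 < kform J₀ (J x) x)

/-- The `J`-norm `‖x‖_J := [J x, x] ^ (1/2)`. -/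
noncomputable def jnorm {H : Type*} [NormedAddCommGroup H] [InnerProductSpace ℂ H]
    (J₀ : H →L[ℂ] H) (J : H →L[ℂ] H) (x : H) : ℝ :=
  Real.sqrt (kform J₀ (J x) x).re

/-!
Let `H₊`, `H₋` be the `±1`-eigenspaces of `J₀` and `p = ‖P₊ x‖`, `q = ‖P₋ x‖` the norms of the
components of `x`, so that `[x, x] = p² - q²` and `‖x‖² = p² + q²`. Pick unit vectors `e ∈ H₊`,
`f ∈ H₋` with `⟪e, x⟫ = p` and `⟪f, x⟫ = q`; indefiniteness makes `H₊` and `H₋` nonzero, so this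
is possible even when a component of `x` vanishes. Replacing `J₀` on the plane spanned by `e, f`
by the hyperbolic reflection `e ↦ c e + d f`, `f ↦ -d e - c f` with `c² - d² = 1`, `c > 0`, gives
a fundamental symmetry `J` with `‖x‖_J² = c (p² + q²) - 2 d p q`. For `(c, d) = (cosh t, sinh t)`
this is `((p - q)² eᵗ + (p + q)² e⁻ᵗ) / 2`, which takes every value above its minimum `|p² - q²|`.
-/

open scoped InnerProductSpace
open InnerProductSpace ContinuousLinearMap

theorem Submodule.exists_norm_eq_one_inner_eq_norm {𝕜 E : Type*} [RCLike 𝕜]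
    [NormedAddCommGroup E] [InnerProductSpace 𝕜 E] {V : Submodule 𝕜 E} (hV : V ≠ ⊥)
    {y : E} (hy : y ∈ V) : ∃ e ∈ V, ‖e‖ = 1 ∧ ⟪e, y⟫_𝕜 = ‖y‖ := by
  rcases eq_or_ne y 0 with rfl | hy0
  · obtain ⟨z, hzV, hz⟩ := Submodule.exists_mem_ne_zero_of_ne_bot hV
    exact ⟨(‖z‖⁻¹ : 𝕜) • z, V.smul_mem _ hzV, norm_smul_inv_norm hz, by simp⟩
  · refine ⟨(‖y‖⁻¹ : 𝕜) • y, V.smul_mem _ hy, norm_smul_inv_norm hy0, ?_⟩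
    rw [inner_smul_left, inner_self_eq_norm_sq_to_K]
    simp only [map_inv₀, RCLike.conj_ofReal]
    field_simp

theorem exists_hyperbolic_combination_eq {p q a : ℝ} (hpq : p + q ≠ 0)
    (ha : |p ^ 2 - q ^ 2| < a ^ 2) :
    ∃ c d : ℝ, c ^ 2 - d ^ 2 = 1 ∧ 0 < c ∧ c * (p ^ 2 + q ^ 2) - 2 * d * p * q = a ^ 2 := by
  have hdisc : 0 ≤ a ^ 4 - (p ^ 2 - q ^ 2) ^ 2 := by
    nlinarith [abs_nonneg (p ^ 2 - q ^ 2), sq_abs (p ^ 2 - q ^ 2)]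
  set s := √(a ^ 4 - (p ^ 2 - q ^ 2) ^ 2)
  have hs2 : s ^ 2 = a ^ 4 - (p ^ 2 - q ^ 2) ^ 2 := Real.sq_sqrt hdisc
  have hK : 0 < a ^ 2 + s :=
    add_pos_of_pos_of_nonneg ((abs_nonneg _).trans_lt ha) (Real.sqrt_nonneg _)
  -- `r = eᵗ` is the smaller root of `(p - q)² r² - 2 a² r + (p + q)² = 0`
  set r := (p + q) ^ 2 / (a ^ 2 + s)
  have hr : 0 < r := div_pos (by positivity) hK
  have hrK : r * (a ^ 2 + s) = (p + q) ^ 2 := div_mul_cancel₀ _ hK.ne'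
  have hquad : (p - q) ^ 2 * r ^ 2 + (p + q) ^ 2 = 2 * a ^ 2 * r := by
    refine mul_right_cancel₀ hK.ne' ?_
    linear_combination ((p - q) ^ 2 * r - (a ^ 2 + s)) * hrK + r * hs2
  refine ⟨(r + r⁻¹) / 2, (r - r⁻¹) / 2, ?_, by positivity, ?_⟩
  · field_simp
    ring
  · field_simp
    linear_combination hquad

theorem pos_add_mul_sub_of_sq_sub_sq_eq_one {c d n a b t : ℝ} (hcd : c ^ 2 - d ^ 2 = 1)
    (hc : 0 < c) (hn : 0 < n) (hab : a ^ 2 + b ^ 2 ≤ n) (ht : |t| ≤ |a| * |b|) :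
    0 < n + (c - 1) * (a ^ 2 + b ^ 2) - 2 * d * t := by
  have hk : 0 < c - |d| := by nlinarith [sq_abs d, abs_nonneg d]
  have hk1 : c - |d| ≤ 1 := by nlinarith [sq_abs d, abs_nonneg d]
  have hdt : d * t ≤ |d| * (|a| * |b|) := (le_abs_self _).trans <| by
    rw [abs_mul]
    exact mul_le_mul_of_nonneg_left ht (abs_nonneg d)
  have hab2 : 2 * (|a| * |b|) ≤ a ^ 2 + b ^ 2 := by
    nlinarith [sq_nonneg (|a| - |b|), sq_abs a, sq_abs b]
  nlinarith [mul_pos hk hn, mul_le_mul_of_nonneg_left hab2 (abs_nonneg d)]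

section Involution

variable {H : Type*} [NormedAddCommGroup H] [InnerProductSpace ℂ H] {J₀ : H →L[ℂ] H}

/-- The `+1`-eigencomponent of `w`; the `-1`-eigencomponent is `posComponent (-J₀) w`. -/
noncomputable def posComponent (J₀ : H →L[ℂ] H) (w : H) : H :=
  (2 : ℂ)⁻¹ • (w + J₀ w)

theorem posComponent_add_posComponent_neg (w : H) :
    posComponent J₀ w + posComponent (-J₀) w = w := by
  rw [posComponent, posComponent, neg_apply]
  module

theorem apply_posComponent (hinv : ∀ x, J₀ (J₀ x) = x) (w : H) :
    J₀ (posComponent J₀ w) = posComponent J₀ w := by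
  rw [posComponent, map_smul, map_add, hinv, add_comm]

theorem apply_posComponent_neg (hinv : ∀ x, J₀ (J₀ x) = x) (w : H) :
    J₀ (posComponent (-J₀) w) = -posComponent (-J₀) w :=
  neg_eq_iff_eq_neg.mp (apply_posComponent (J₀ := -J₀) (by simp [hinv]) w)

theorem inner_apply_of_apply_eq_self (hsa : ∀ x y : H, ⟪J₀ x, y⟫_ℂ = ⟪x, J₀ y⟫_ℂ) {e : H}
    (he : J₀ e = e) (z : H) : ⟪e, J₀ z⟫_ℂ = ⟪e, z⟫_ℂ := by
  rw [← hsa, he]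

theorem inner_apply_of_apply_eq_neg (hsa : ∀ x y : H, ⟪J₀ x, y⟫_ℂ = ⟪x, J₀ y⟫_ℂ) {f : H}
    (hf : J₀ f = -f) (z : H) : ⟪f, J₀ z⟫_ℂ = -⟪f, z⟫_ℂ := by
  rw [← hsa, hf, inner_neg_left]

theorem inner_eq_zero_of_apply_eq_self_of_apply_eq_neg
    (hsa : ∀ x y : H, ⟪J₀ x, y⟫_ℂ = ⟪x, J₀ y⟫_ℂ) {e f : H} (he : J₀ e = e) (hf : J₀ f = -f) :
    ⟪e, f⟫_ℂ = 0 := by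
  have h := inner_apply_of_apply_eq_self hsa he f
  rw [hf, inner_neg_right] at h
  linear_combination -h / 2

theorem inner_posComponent_of_apply_eq_self (hsa : ∀ x y : H, ⟪J₀ x, y⟫_ℂ = ⟪x, J₀ y⟫_ℂ)
    {e : H} (he : J₀ e = e) (w : H) : ⟪e, posComponent J₀ w⟫_ℂ = ⟪e, w⟫_ℂ := by
  rw [posComponent, inner_smul_right, inner_add_right, inner_apply_of_apply_eq_self hsa he]
  ring

theorem inner_posComponent_posComponent_neg (hinv : ∀ x, J₀ (J₀ x) = x)
    (hsa : ∀ x y : H, ⟪J₀ x, y⟫_ℂ = ⟪x, J₀ y⟫_ℂ) (v w : H) :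
    ⟪posComponent J₀ v, posComponent (-J₀) w⟫_ℂ = 0 :=
  inner_eq_zero_of_apply_eq_self_of_apply_eq_neg hsa (apply_posComponent hinv v)
    (apply_posComponent_neg hinv w)

theorem kform_self_eq (hinv : ∀ x, J₀ (J₀ x) = x) (hsa : ∀ x y : H, ⟪J₀ x, y⟫_ℂ = ⟪x, J₀ y⟫_ℂ)
    (w : H) :
    kform J₀ w w = ((‖posComponent J₀ w‖ ^ 2 - ‖posComponent (-J₀) w‖ ^ 2 : ℝ) : ℂ) := by
  have hJw : J₀ w = posComponent J₀ w - posComponent (-J₀) w := by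
    conv_lhs => rw [← posComponent_add_posComponent_neg (J₀ := J₀) w]
    rw [map_add, apply_posComponent hinv, apply_posComponent_neg hinv, sub_eq_add_neg]
  have h₁ := inner_posComponent_posComponent_neg hinv hsa w w
  have h₂ : ⟪posComponent (-J₀) w, posComponent J₀ w⟫_ℂ = 0 := by
    rw [← inner_conj_symm, h₁, map_zero]
  calc kform J₀ w w = ⟪posComponent J₀ w - posComponent (-J₀) w,
        posComponent J₀ w + posComponent (-J₀) w⟫_ℂ := by
        rw [kform, hJw, posComponent_add_posComponent_neg]
    _ = _ := by
        simp only [inner_sub_left, inner_add_right, h₁, h₂, inner_self_eq_norm_sq_to_K,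
          RCLike.ofReal_eq_complex_ofReal]
        push_cast
        ring

theorem norm_sq_eq_posComponent_add (hinv : ∀ x, J₀ (J₀ x) = x)
    (hsa : ∀ x y : H, ⟪J₀ x, y⟫_ℂ = ⟪x, J₀ y⟫_ℂ) (w : H) :
    ‖w‖ ^ 2 = ‖posComponent J₀ w‖ ^ 2 + ‖posComponent (-J₀) w‖ ^ 2 := by
  conv_lhs => rw [← posComponent_add_posComponent_neg (J₀ := J₀) w]
  simpa only [sq] using norm_add_sq_eq_norm_sq_add_norm_sq_of_inner_eq_zero _ _
    (inner_posComponent_posComponent_neg hinv hsa w w)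

theorem exists_apply_eq_self_inner_eq_norm_posComponent (hinv : ∀ x, J₀ (J₀ x) = x)
    (hsa : ∀ x y : H, ⟪J₀ x, y⟫_ℂ = ⟪x, J₀ y⟫_ℂ) {u : H} (hu : 0 < kform J₀ u u) (x : H) :
    ∃ e, J₀ e = e ∧ ‖e‖ = 1 ∧ ⟪e, x⟫_ℂ = ‖posComponent J₀ x‖ := by
  let V := Module.End.eigenspace (J₀ : Module.End ℂ H) 1
  have mem_V {w : H} : w ∈ V ↔ J₀ w = w := by simp [V]
  have hu' : posComponent J₀ u ≠ 0 := by
    intro h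
    rw [kform_self_eq hinv hsa, h, norm_zero, Complex.zero_lt_real] at hu
    nlinarith [sq_nonneg ‖posComponent (-J₀) u‖]
  have hV : V ≠ ⊥ := (Submodule.ne_bot_iff V).2 ⟨_, mem_V.2 (apply_posComponent hinv u), hu'⟩
  obtain ⟨e, heV, he1, hex⟩ :=
    Submodule.exists_norm_eq_one_inner_eq_norm hV (mem_V.2 (apply_posComponent hinv x))
  have he : J₀ e = e := mem_V.1 heV
  exact ⟨e, he, he1, (inner_posComponent_of_apply_eq_self hsa he x).symm.trans hex⟩

theorem exists_apply_eq_neg_inner_eq_norm_posComponent_neg (hinv : ∀ x, J₀ (J₀ x) = x)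
    (hsa : ∀ x y : H, ⟪J₀ x, y⟫_ℂ = ⟪x, J₀ y⟫_ℂ) {v : H} (hv : kform J₀ v v < 0) (x : H) :
    ∃ f, J₀ f = -f ∧ ‖f‖ = 1 ∧ ⟪f, x⟫_ℂ = ‖posComponent (-J₀) x‖ := by
  obtain ⟨f, hf, hf1, hfx⟩ := exists_apply_eq_self_inner_eq_norm_posComponent (J₀ := -J₀)
    (by simpa using hinv) (by simpa using hsa) (u := v) (by simpa [kform] using hv) x
  exact ⟨f, neg_eq_iff_eq_neg.mp hf, hf1, hfx⟩

end Involution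

section Boost

variable {H : Type*} [NormedAddCommGroup H] [InnerProductSpace ℂ H] {J₀ : H →L[ℂ] H}
  {e f : H} {c d : ℝ}

/-- For `J₀ e = e`, `J₀ f = -f` orthonormal, this acts on `span {e, f}` by
`e ↦ c e + d f`, `f ↦ -d e - c f` and agrees with `J₀` on its orthogonal complement. -/
noncomputable def boost (J₀ : H →L[ℂ] H) (e f : H) (c d : ℝ) : H →L[ℂ] H :=
  J₀ + ((c : ℂ) - 1) • (rankOne ℂ e e - rankOne ℂ f f) + (d : ℂ) • (rankOne ℂ f e - rankOne ℂ e f)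

theorem boost_apply (y : H) :
    boost J₀ e f c d y = J₀ y + ((c : ℂ) - 1) • (⟪e, y⟫_ℂ • e - ⟪f, y⟫_ℂ • f)
      + (d : ℂ) • (⟪e, y⟫_ℂ • f - ⟪f, y⟫_ℂ • e) :=
  rfl

theorem boost_boost (hinv : ∀ x, J₀ (J₀ x) = x) (hsa : ∀ x y : H, ⟪J₀ x, y⟫_ℂ = ⟪x, J₀ y⟫_ℂ)
    (he : J₀ e = e) (hf : J₀ f = -f) (he1 : ‖e‖ = 1) (hf1 : ‖f‖ = 1) (hcd : c ^ 2 - d ^ 2 = 1)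
    (y : H) : boost J₀ e f c d (boost J₀ e f c d y) = y := by
  have hef := inner_eq_zero_of_apply_eq_self_of_apply_eq_neg hsa he hf
  have hfe : ⟪f, e⟫_ℂ = 0 := by rw [← inner_conj_symm, hef, map_zero]
  have hee : ⟪e, e⟫_ℂ = 1 := by simp [inner_self_eq_norm_sq_to_K, he1]
  have hff : ⟪f, f⟫_ℂ = 1 := by simp [inner_self_eq_norm_sq_to_K, hf1]
  have hcdC : (c : ℂ) ^ 2 - (d : ℂ) ^ 2 = 1 := by exact_mod_cast hcd
  simp only [boost_apply, map_add, map_smul, map_sub, he, hf, hinv, hee, hff, hef, hfe,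
    inner_apply_of_apply_eq_self hsa he, inner_apply_of_apply_eq_neg hsa hf]
  match_scalars <;> grind

theorem kform_boost_comm (hsa : ∀ x y : H, ⟪J₀ x, y⟫_ℂ = ⟪x, J₀ y⟫_ℂ) (he : J₀ e = e)
    (hf : J₀ f = -f) (u v : H) :
    kform J₀ (boost J₀ e f c d u) v = kform J₀ u (boost J₀ e f c d v) := by
  simp only [kform, boost_apply, map_add, map_smul, map_sub, he, hf, hsa,
    inner_add_left, inner_add_right, inner_smul_left, inner_smul_right,
    inner_sub_left, inner_sub_right, inner_neg_left, inner_neg_right,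
    Complex.conj_ofReal, map_sub, map_one, inner_conj_symm]
  ring

theorem kform_boost_self (hinv : ∀ x, J₀ (J₀ x) = x) (he : J₀ e = e) (hf : J₀ f = -f) (y : H) :
    kform J₀ (boost J₀ e f c d y) y = ((‖y‖ ^ 2 + (c - 1) * (‖⟪e, y⟫_ℂ‖ ^ 2 + ‖⟪f, y⟫_ℂ‖ ^ 2)
      - 2 * d * (⟪y, e⟫_ℂ * ⟪f, y⟫_ℂ).re : ℝ) : ℂ) := by
  have hconj (v : H) : ⟪y, v⟫_ℂ * ⟪v, y⟫_ℂ = (‖⟪v, y⟫_ℂ‖ : ℂ) ^ 2 := by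
    rw [← inner_conj_symm y v, Complex.conj_mul']
  simp only [kform, boost_apply, map_add, map_smul, map_sub, hinv, he, hf,
    inner_add_left, inner_smul_left, inner_sub_left, inner_neg_left, inner_conj_symm,
    inner_self_eq_norm_sq_to_K, RCLike.ofReal_eq_complex_ofReal, Complex.conj_ofReal, map_one]
  rw [Complex.ofReal_sub, Complex.ofReal_mul, Complex.re_eq_add_conj, map_mul, inner_conj_symm,
    inner_conj_symm]
  push_cast
  linear_combination ((c : ℂ) - 1) * (hconj e + hconj f)

theorem kform_boost_self_pos (hinv : ∀ x, J₀ (J₀ x) = x)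
    (hsa : ∀ x y : H, ⟪J₀ x, y⟫_ℂ = ⟪x, J₀ y⟫_ℂ) (he : J₀ e = e) (hf : J₀ f = -f) (he1 : ‖e‖ = 1)
    (hf1 : ‖f‖ = 1) (hcd : c ^ 2 - d ^ 2 = 1) (hc : 0 < c) {y : H} (hy : y ≠ 0) :
    0 < kform J₀ (boost J₀ e f c d y) y := by
  have hon : Orthonormal ℂ ![e, f] := by
    simp [he1, hf1, inner_eq_zero_of_apply_eq_self_of_apply_eq_neg hsa he hf]
  have hbessel : ‖⟪e, y⟫_ℂ‖ ^ 2 + ‖⟪f, y⟫_ℂ‖ ^ 2 ≤ ‖y‖ ^ 2 := by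
    simpa [Fin.sum_univ_two] using hon.sum_inner_products_le y (s := Finset.univ)
  have hre : |(⟪y, e⟫_ℂ * ⟪f, y⟫_ℂ).re| ≤ |‖⟪e, y⟫_ℂ‖| * |‖⟪f, y⟫_ℂ‖| := by
    rw [abs_norm, abs_norm, ← norm_inner_symm y e, ← norm_mul]
    exact Complex.abs_re_le_norm _
  rw [kform_boost_self hinv he hf, Complex.zero_lt_real]
  exact pos_add_mul_sub_of_sq_sub_sq_eq_one hcd hc (by positivity) hbessel hre

theorem isFundamentalSymmetry_boost (hinv : ∀ x, J₀ (J₀ x) = x)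
    (hsa : ∀ x y : H, ⟪J₀ x, y⟫_ℂ = ⟪x, J₀ y⟫_ℂ) (he : J₀ e = e) (hf : J₀ f = -f) (he1 : ‖e‖ = 1)
    (hf1 : ‖f‖ = 1) (hcd : c ^ 2 - d ^ 2 = 1) (hc : 0 < c) :
    IsFundamentalSymmetry J₀ (boost J₀ e f c d) :=
  ⟨boost_boost hinv hsa he hf he1 hf1 hcd, kform_boost_comm hsa he hf,
    fun _ hy => kform_boost_self_pos hinv hsa he hf he1 hf1 hcd hc hy⟩

theorem re_kform_boost_self_of_inner_eq (hinv : ∀ x, J₀ (J₀ x) = x) (he : J₀ e = e)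
    (hf : J₀ f = -f) {x : H} {p q : ℝ} (hp : ⟪e, x⟫_ℂ = p) (hq : ⟪f, x⟫_ℂ = q) :
    (kform J₀ (boost J₀ e f c d x) x).re = ‖x‖ ^ 2 + (c - 1) * (p ^ 2 + q ^ 2) - 2 * d * p * q := by
  rw [kform_boost_self hinv he hf, Complex.ofReal_re, ← inner_conj_symm x e, hp, hq]
  simp only [Complex.norm_real, Real.norm_eq_abs, sq_abs, Complex.conj_ofReal]
  rw [← Complex.ofReal_mul, Complex.ofReal_re]
  ring

end Boost

theorem exists_fundamentalSymmetry_jnorm_eq_of_form_ne_zero_general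
    {H : Type*} [NormedAddCommGroup H] [InnerProductSpace ℂ H]
    (J₀ : H →L[ℂ] H)
    (hinv : ∀ x, J₀ (J₀ x) = x)
    (hsa : ∀ x y : H, (inner ℂ (J₀ x) y : ℂ) = inner ℂ x (J₀ y))
    (hindef : ∃ u v : H, 0 < kform J₀ u u ∧ kform J₀ v v < 0)
    (x : H) (hx : kform J₀ x x ≠ 0)
    (a : ℝ) (ha : Real.sqrt ‖kform J₀ x x‖ < a) :
    ∃ Ja : H →L[ℂ] H, IsFundamentalSymmetry J₀ Ja ∧ jnorm J₀ Ja x = a := by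
  obtain ⟨u, v, hu, hv⟩ := hindef
  obtain ⟨e, he, he1, hex⟩ := exists_apply_eq_self_inner_eq_norm_posComponent hinv hsa hu x
  obtain ⟨f, hf, hf1, hfx⟩ := exists_apply_eq_neg_inner_eq_norm_posComponent_neg hinv hsa hv x
  set p := ‖posComponent J₀ x‖
  set q := ‖posComponent (-J₀) x‖
  have hxx : kform J₀ x x = ((p ^ 2 - q ^ 2 : ℝ) : ℂ) := kform_self_eq hinv hsa x
  have hxn : ‖x‖ ^ 2 = p ^ 2 + q ^ 2 := norm_sq_eq_posComponent_add hinv hsa x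
  have hpq : p + q ≠ 0 := fun h ↦ hx <| by
    rw [hxx, show p ^ 2 - q ^ 2 = (p - q) * (p + q) by ring, h, mul_zero, Complex.ofReal_zero]
  have ha0 : 0 < a := (Real.sqrt_nonneg _).trans_lt ha
  rw [hxx, Complex.norm_real, Real.norm_eq_abs, Real.sqrt_lt' ha0] at ha
  obtain ⟨c, d, hcd, hc, hval⟩ := exists_hyperbolic_combination_eq hpq ha
  refine ⟨boost J₀ e f c d, isFundamentalSymmetry_boost hinv hsa he hf he1 hf1 hcd hc, ?_⟩
  rw [jnorm, re_kform_boost_self_of_inner_eq hinv he hf hex hfx, hxn,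
    show p ^ 2 + q ^ 2 + (c - 1) * (p ^ 2 + q ^ 2) - 2 * d * p * q = a ^ 2 by
      linear_combination hval, Real.sqrt_sq ha0.le]

theorem exists_fundamentalSymmetry_jnorm_eq_of_form_ne_zero
    {H : Type*} [NormedAddCommGroup H] [InnerProductSpace ℂ H] [CompleteSpace H]
    (J₀ : H →L[ℂ] H)
    (hinv : ∀ x, J₀ (J₀ x) = x)
    (hsa : ∀ x y : H, (inner ℂ (J₀ x) y : ℂ) = inner ℂ x (J₀ y))
    (hindef : ∃ u v : H, 0 < kform J₀ u u ∧ kform J₀ v v < 0)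
    (x : H) (hx : kform J₀ x x ≠ 0)
    (a : ℝ) (ha : Real.sqrt ‖kform J₀ x x‖ < a) :
    ∃ Ja : H →L[ℂ] H, IsFundamentalSymmetry J₀ Ja ∧ jnorm J₀ Ja x = a :=
  exists_fundamentalSymmetry_jnorm_eq_of_form_ne_zero_general J₀ hinv hsa hindef x hx a ha
end

section
/- Let x ∈ H with x ≠ 0 and [x, x] = 0 (a nonzero neutral element), and let J be a given fundamental symmetry of (H, [·,·]). Then there exist fundamental symmetries K₁ and K₂ such that ‖x‖_{K₁} < ‖x‖_J < ‖x‖_{K₂}. -/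
/-!
If `x` is neutral and nonzero, then `y := [J x, x]⁻¹ • J x` is neutral with `[x, y] = 1`, so
`x, y` is a hyperbolic pair. The boost `T` that scales `x` by `r > 0`, `y` by `r⁻¹` and fixes
the `[·,·]`-orthogonal complement of `{x, y}` preserves `[·,·]`; hence `T⁻¹ J T` is again a
fundamental symmetry, and its norm of `x` is `‖T x‖_J = r ‖x‖_J`. Take `r = 1/2` and `r = 2`.
-/

open scoped ComplexOrder

open ComplexConjugate

section
variable {H : Type*} [NormedAddCommGroup H] [InnerProductSpace ℂ H] (J₀ : H →L[ℂ] H)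

@[simp]
lemma kform_add_left (a b c : H) : kform J₀ (a + b) c = kform J₀ a c + kform J₀ b c := by
  simp [kform]

@[simp]
lemma kform_add_right (a b c : H) : kform J₀ a (b + c) = kform J₀ a b + kform J₀ a c := by
  simp [kform]

@[simp]
lemma kform_smul_left (k : ℂ) (a b : H) : kform J₀ (k • a) b = conj k * kform J₀ a b := by
  simp [kform, mul_comm]

@[simp]
lemma kform_smul_right (k : ℂ) (a b : H) : kform J₀ a (k • b) = k * kform J₀ a b := by
  simp [kform]

lemma conj_kform (hsa : ∀ x y : H, (inner ℂ (J₀ x) y : ℂ) = inner ℂ x (J₀ y)) (a b : H) :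
    conj (kform J₀ a b) = kform J₀ b a := by
  rw [kform, kform, inner_conj_symm, hsa]

structure IsHyperbolicPair (x y : H) : Prop where
  kform_left_self : kform J₀ x x = 0
  kform_right_self : kform J₀ y y = 0
  kform_left_right : kform J₀ x y = 1
  kform_right_left : kform J₀ y x = 1

/-- For a hyperbolic pair `x, y` this is the `[·,·]`-unitary map scaling `x` by `r` and `y` by
`r⁻¹` and fixing the `[·,·]`-orthogonal complement of `{x, y}`. -/
noncomputable def lightconeBoost (x y : H) (r : ℝ) : H →L[ℂ] H :=
  ContinuousLinearMap.id ℂ H + ((r - 1 : ℂ) • innerSL ℂ (J₀ y)).smulRight x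
    + ((r⁻¹ - 1 : ℂ) • innerSL ℂ (J₀ x)).smulRight y

lemma lightconeBoost_apply (x y : H) (r : ℝ) (z : H) :
    lightconeBoost J₀ x y r z
      = z + ((r - 1 : ℂ) * kform J₀ y z) • x + ((r⁻¹ - 1 : ℂ) * kform J₀ x z) • y := by
  simp [lightconeBoost, kform]

variable {J₀} {x y : H}

namespace IsHyperbolicPair

variable (h : IsHyperbolicPair J₀ x y)
include h

lemma lightconeBoost_apply_left (r : ℝ) : lightconeBoost J₀ x y r x = (r : ℂ) • x := by
  rw [lightconeBoost_apply, h.kform_right_left, h.kform_left_self]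
  module

lemma lightconeBoost_apply_lightconeBoost (r s : ℝ) (z : H) :
    lightconeBoost J₀ x y r (lightconeBoost J₀ x y s z) = lightconeBoost J₀ x y (r * s) z := by
  simp only [lightconeBoost_apply, kform_add_right, kform_smul_right, h.kform_left_self,
    h.kform_right_self, h.kform_left_right, h.kform_right_left]
  push_cast
  match_scalars <;> ring

lemma lightconeBoost_apply_lightconeBoost_inv {r : ℝ} (hr : r ≠ 0) (z : H) :
    lightconeBoost J₀ x y r (lightconeBoost J₀ x y r⁻¹ z) = z := by
  rw [h.lightconeBoost_apply_lightconeBoost, mul_inv_cancel₀ hr]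
  simp [lightconeBoost_apply]

lemma kform_lightconeBoost (hsa : ∀ x y : H, (inner ℂ (J₀ x) y : ℂ) = inner ℂ x (J₀ y))
    {r : ℝ} (hr : r ≠ 0) (z w : H) :
    kform J₀ (lightconeBoost J₀ x y r z) (lightconeBoost J₀ x y r w) = kform J₀ z w := by
  simp only [lightconeBoost_apply, kform_add_left, kform_add_right, kform_smul_left,
    kform_smul_right, map_mul, map_sub, map_one, Complex.conj_ofReal, Complex.ofReal_inv,
    map_inv₀, conj_kform J₀ hsa, h.kform_left_self, h.kform_right_self, h.kform_left_right,
    h.kform_right_left]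
  have hr' : (r : ℂ) * (r : ℂ)⁻¹ = 1 := mul_inv_cancel₀ (by exact_mod_cast hr)
  linear_combination (kform J₀ z y * kform J₀ x w + kform J₀ z x * kform J₀ y w) * hr'

end IsHyperbolicPair

variable {J : H →L[ℂ] H}

lemma IsFundamentalSymmetry.conjugate (hJ : IsFundamentalSymmetry J₀ J) {T T' : H →L[ℂ] H}
    (hT : ∀ z w, kform J₀ (T z) (T w) = kform J₀ z w) (hTT' : ∀ z, T (T' z) = z)
    (hT'T : ∀ z, T' (T z) = z) : IsFundamentalSymmetry J₀ (T' ∘L J ∘L T) := by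
  refine ⟨fun z ↦ ?_, fun z w ↦ ?_, fun z hz ↦ ?_⟩
  · simp only [ContinuousLinearMap.comp_apply, hTT', hJ.1, hT'T]
  · calc kform J₀ (T' (J (T z))) w = kform J₀ (J (T z)) (T w) := by rw [← hT, hTT']
      _ = kform J₀ (T z) (J (T w)) := hJ.2.1 _ _
      _ = kform J₀ z (T' (J (T w))) := by rw [← hT z, hTT']
  · have hTz : T z ≠ 0 := fun h ↦ hz (by rw [← hT'T z, h, map_zero])
    simpa only [ContinuousLinearMap.comp_apply, ← hT (T' _), hTT'] using hJ.2.2 _ hTz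

lemma jnorm_conjugate {T T' : H →L[ℂ] H} (hT : ∀ z w, kform J₀ (T z) (T w) = kform J₀ z w)
    (hTT' : ∀ z, T (T' z) = z) (z : H) : jnorm J₀ (T' ∘L J ∘L T) z = jnorm J₀ J (T z) := by
  simp only [jnorm, ContinuousLinearMap.comp_apply, ← hT (T' _), hTT']

lemma jnorm_real_smul (r : ℝ) (z : H) : jnorm J₀ J ((r : ℂ) • z) = |r| * jnorm J₀ J z := by
  simp only [jnorm, map_smul, kform_smul_left, kform_smul_right, Complex.conj_ofReal,
    ← mul_assoc, ← Complex.ofReal_mul, Complex.re_ofReal_mul]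
  rw [Real.sqrt_mul (mul_self_nonneg r), Real.sqrt_mul_self_eq_abs]

lemma IsFundamentalSymmetry.kform_apply_self (hJ : IsFundamentalSymmetry J₀ J) (z : H) :
    kform J₀ (J z) z = ((jnorm J₀ J z ^ 2 : ℝ) : ℂ) := by
  have hnonneg : 0 ≤ kform J₀ (J z) z := by
    rcases eq_or_ne z 0 with rfl | hz
    · simp [kform]
    · exact (hJ.2.2 z hz).le
  rw [jnorm, Real.sq_sqrt (Complex.nonneg_iff.mp hnonneg).1]
  exact Complex.eq_re_of_ofReal_le (r := 0) (by simpa using hnonneg)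

lemma IsFundamentalSymmetry.jnorm_pos (hJ : IsFundamentalSymmetry J₀ J) {z : H} (hz : z ≠ 0) :
    0 < jnorm J₀ J z :=
  Real.sqrt_pos.mpr (Complex.pos_iff.mp (hJ.2.2 z hz)).1

lemma IsFundamentalSymmetry.exists_isHyperbolicPair (hJ : IsFundamentalSymmetry J₀ J)
    (hx0 : x ≠ 0) (hx : kform J₀ x x = 0) : ∃ y, IsHyperbolicPair J₀ x y := by
  set a : ℝ := jnorm J₀ J x ^ 2
  have ha : (a : ℂ) ≠ 0 := by exact_mod_cast (pow_pos (hJ.jnorm_pos hx0) 2).ne'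
  have hJx : kform J₀ (J x) x = a := hJ.kform_apply_self x
  refine ⟨(a⁻¹ : ℂ) • J x, hx, ?_, ?_, ?_⟩
  · simp [hJ.2.1 x (J x), hJ.1, hx]
  · simp [← hJ.2.1, hJx, ha]
  · simp [hJx, ha]

end

theorem exists_fundamentalSymmetry_jnorm_eq_mul_of_neutral {H : Type*} [NormedAddCommGroup H]
    [InnerProductSpace ℂ H] {J₀ : H →L[ℂ] H}
    (hsa : ∀ x y : H, (inner ℂ (J₀ x) y : ℂ) = inner ℂ x (J₀ y))
    {x : H} (hx0 : x ≠ 0) (hx : kform J₀ x x = 0) {J : H →L[ℂ] H}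
    (hJ : IsFundamentalSymmetry J₀ J) {r : ℝ} (hr : 0 < r) :
    ∃ K : H →L[ℂ] H, IsFundamentalSymmetry J₀ K ∧ jnorm J₀ K x = r * jnorm J₀ J x := by
  obtain ⟨y, hxy⟩ := hJ.exists_isHyperbolicPair hx0 hx
  set T := lightconeBoost J₀ x y
  have hT : ∀ z w, kform J₀ (T r z) (T r w) = kform J₀ z w := hxy.kform_lightconeBoost hsa hr.ne'
  have hT_inv : ∀ z, T r (T r⁻¹ z) = z := hxy.lightconeBoost_apply_lightconeBoost_inv hr.ne'
  have hT_inv' : ∀ z, T r⁻¹ (T r z) = z := by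
    simpa using hxy.lightconeBoost_apply_lightconeBoost_inv (inv_ne_zero hr.ne')
  refine ⟨T r⁻¹ ∘L J ∘L T r, hJ.conjugate hT hT_inv hT_inv', ?_⟩
  rw [jnorm_conjugate hT hT_inv, hxy.lightconeBoost_apply_left, jnorm_real_smul, abs_of_pos hr]

theorem exists_fundamentalSymmetry_jnorm_lt_lt_of_neutral_general
    {H : Type*} [NormedAddCommGroup H] [InnerProductSpace ℂ H]
    (J₀ : H →L[ℂ] H)
    (hsa : ∀ x y : H, (inner ℂ (J₀ x) y : ℂ) = inner ℂ x (J₀ y))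
    (x : H) (hx0 : x ≠ 0) (hx : kform J₀ x x = 0)
    (J : H →L[ℂ] H) (hJ : IsFundamentalSymmetry J₀ J) :
    ∃ K₁ K₂ : H →L[ℂ] H, IsFundamentalSymmetry J₀ K₁ ∧ IsFundamentalSymmetry J₀ K₂ ∧
      jnorm J₀ K₁ x < jnorm J₀ J x ∧ jnorm J₀ J x < jnorm J₀ K₂ x := by
  obtain ⟨K₁, hK₁, hK₁x⟩ :=
    exists_fundamentalSymmetry_jnorm_eq_mul_of_neutral hsa hx0 hx hJ (r := 1 / 2) (by norm_num)
  obtain ⟨K₂, hK₂, hK₂x⟩ :=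
    exists_fundamentalSymmetry_jnorm_eq_mul_of_neutral hsa hx0 hx hJ (r := 2) (by norm_num)
  have hpos := hJ.jnorm_pos hx0
  exact ⟨K₁, K₂, hK₁, hK₂, by linarith, by linarith⟩

theorem exists_fundamentalSymmetry_jnorm_lt_lt_of_neutral
    {H : Type*} [NormedAddCommGroup H] [InnerProductSpace ℂ H] [CompleteSpace H]
    (J₀ : H →L[ℂ] H)
    (hinv : ∀ x, J₀ (J₀ x) = x)
    (hsa : ∀ x y : H, (inner ℂ (J₀ x) y : ℂ) = inner ℂ x (J₀ y))
    (x : H) (hx0 : x ≠ 0) (hx : kform J₀ x x = 0)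
    (J : H →L[ℂ] H) (hJ : IsFundamentalSymmetry J₀ J) :
    ∃ K₁ K₂ : H →L[ℂ] H, IsFundamentalSymmetry J₀ K₁ ∧ IsFundamentalSymmetry J₀ K₂ ∧
      jnorm J₀ K₁ x < jnorm J₀ J x ∧ jnorm J₀ J x < jnorm J₀ K₂ x :=
  exists_fundamentalSymmetry_jnorm_lt_lt_of_neutral_general J₀ hsa x hx0 hx J hJ
end

section
/- Assume the form [·,·] is indefinite. Let x ∈ H be a nonzero vector (neutral or non-neutral) and suppose J₁ and J₂ are fundamental symmetries of (H, [·,·]) with ‖x‖_{J₁} < ‖x‖_{J₂}. Then there exists a fundamental symmetry J such that ‖x‖_{J₁} < ‖x‖_J < ‖x‖_{J₂}. -/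
open scoped ComplexOrder

/-!
Let `p` be a `J₁`-positive and `n` a `J₁`-negative vector with `[p, p] = 1`, `[n, n] = -1`, not
both `[·,·]`-orthogonal to `x`; they exist because the form is indefinite and `x ≠ 0`. The
hyperbolic rotations `R t` of the plane spanned by `p` and `n` are `[·,·]`-unitary and form a
one-parameter group, so `J = R t J₁ R (-t) = R (2t) J₁` is a fundamental symmetry with
`‖x‖_J² = ‖x‖_{J₁}² + (cosh 2t - 1) K + sinh 2t B`, where `K = |[p, x]|² + |[n, x]|² > 0`.
Since `cosh` is even and `sinh` odd, this continuous function of `t` is unbounded above, so it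
takes every value above `‖x‖_{J₁}²`, in particular the square of `(‖x‖_{J₁} + ‖x‖_{J₂}) / 2`.
-/

section Kform

variable {H : Type*} [NormedAddCommGroup H] [InnerProductSpace ℂ H] {J₀ : H →L[ℂ] H}

lemma kform_add_left_s8 (x y z : H) : kform J₀ (x + y) z = kform J₀ x z + kform J₀ y z := by
  simp [kform]

lemma kform_sub_left (x y z : H) : kform J₀ (x - y) z = kform J₀ x z - kform J₀ y z := by
  simp [kform]

lemma kform_neg_left (x y : H) : kform J₀ (-x) y = -kform J₀ x y := by
  simp [kform]

lemma kform_smul_left_s8 (c : ℂ) (x y : H) :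
    kform J₀ (c • x) y = (starRingEnd ℂ) c * kform J₀ x y := by
  simp [kform, mul_comm]

lemma kform_add_right_s8 (x y z : H) : kform J₀ x (y + z) = kform J₀ x y + kform J₀ x z := by
  simp [kform]

lemma kform_sub_right (x y z : H) : kform J₀ x (y - z) = kform J₀ x y - kform J₀ x z := by
  simp [kform]

lemma kform_neg_right (x y : H) : kform J₀ x (-y) = -kform J₀ x y := by
  simp [kform]

lemma kform_smul_right_s8 (c : ℂ) (x y : H) : kform J₀ x (c • y) = c * kform J₀ x y := by
  simp [kform]

lemma kform_conj_symm (hsa : ∀ x y : H, (inner ℂ (J₀ x) y : ℂ) = inner ℂ x (J₀ y)) (x y : H) :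
    (starRingEnd ℂ) (kform J₀ y x) = kform J₀ x y := by
  rw [kform, kform, hsa, inner_conj_symm]

lemma kform_ofReal_smul_self (t : ℝ) (w : H) :
    kform J₀ ((t : ℂ) • w) ((t : ℂ) • w) = ((t ^ 2 : ℝ) : ℂ) * kform J₀ w w := by
  rw [kform_smul_left_s8, kform_smul_right_s8, Complex.conj_ofReal]
  push_cast
  ring

lemma exists_kform_ofReal_smul_self_eq_one {w : H} (hw : 0 < kform J₀ w w) :
    ∃ t : ℝ, t ≠ 0 ∧ kform J₀ ((t : ℂ) • w) ((t : ℂ) • w) = 1 := by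
  obtain ⟨hr, him⟩ := Complex.pos_iff.mp hw
  set r := (kform J₀ w w).re
  refine ⟨(√r)⁻¹, by positivity, ?_⟩
  rw [kform_ofReal_smul_self, Complex.ext (z := kform J₀ w w) (w := r) rfl him.symm, inv_pow,
    Real.sq_sqrt hr.le, ← Complex.ofReal_mul, inv_mul_cancel₀ hr.ne', Complex.ofReal_one]

lemma exists_kform_ofReal_smul_self_eq_neg_one {w : H} (hw : kform J₀ w w < 0) :
    ∃ t : ℝ, t ≠ 0 ∧ kform J₀ ((t : ℂ) • w) ((t : ℂ) • w) = -1 := by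
  obtain ⟨hr, him⟩ := Complex.lt_def.mp hw
  set r := (kform J₀ w w).re
  have hr' : 0 < -r := neg_pos.mpr hr
  refine ⟨(√(-r))⁻¹, by positivity, ?_⟩
  rw [kform_ofReal_smul_self, Complex.ext (z := kform J₀ w w) (w := r) rfl him, inv_pow,
    Real.sq_sqrt hr'.le, ← Complex.ofReal_mul, inv_mul_eq_div, div_neg, div_self hr.ne,
    Complex.ofReal_neg, Complex.ofReal_one]

end Kform

namespace IsFundamentalSymmetry

variable {H : Type*} [NormedAddCommGroup H] [InnerProductSpace ℂ H] {J₀ J : H →L[ℂ] H}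

lemma re_kform_apply_self_nonneg (hJ : IsFundamentalSymmetry J₀ J) (x : H) :
    0 ≤ (kform J₀ (J x) x).re := by
  rcases eq_or_ne x 0 with rfl | hx
  · simp [kform]
  · exact (Complex.pos_iff.mp (hJ.2.2 x hx)).1.le

lemma kform_self_pos (hJ : IsFundamentalSymmetry J₀ J) {y : H} (hy : J y = y) (hy0 : y ≠ 0) :
    0 < kform J₀ y y := by
  simpa [hy] using hJ.2.2 y hy0

lemma kform_self_neg (hJ : IsFundamentalSymmetry J₀ J) {y : H} (hy : J y = -y) (hy0 : y ≠ 0) :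
    kform J₀ y y < 0 := by
  simpa [hy, kform_neg_left] using hJ.2.2 y hy0

lemma apply_add_apply_self (hJ : IsFundamentalSymmetry J₀ J) (w : H) :
    J (w + J w) = w + J w := by
  rw [map_add, hJ.1, add_comm]

lemma apply_sub_apply_self (hJ : IsFundamentalSymmetry J₀ J) (w : H) :
    J (w - J w) = -(w - J w) := by
  rw [map_sub, hJ.1, neg_sub]

lemma add_apply_self_ne_zero (hJ : IsFundamentalSymmetry J₀ J) {u : H}
    (hu : 0 < kform J₀ u u) : u + J u ≠ 0 := by
  intro h
  have hu0 : u ≠ 0 := by rintro rfl; simp [kform] at hu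
  have hJu : J u = -u := eq_neg_of_add_eq_zero_right h
  exact (hJ.2.2 u hu0).not_gt (by simpa [hJu, kform_neg_left] using hu)

lemma sub_apply_self_ne_zero (hJ : IsFundamentalSymmetry J₀ J) {v : H}
    (hv : kform J₀ v v < 0) : v - J v ≠ 0 := by
  intro h
  have hv0 : v ≠ 0 := by rintro rfl; simp [kform] at hv
  have hJv : J v = v := (sub_eq_zero.mp h).symm
  exact (hJ.2.2 v hv0).not_gt (by simpa [hJv] using hv)

/-- The `±1`-eigenvectors of `J` are `[·,·]`-orthogonal, so
`[x ± J x, x ± J x] = 2 [x ± J x, x]`. -/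
lemma kform_add_apply_self_ne_zero (hJ : IsFundamentalSymmetry J₀ J) {x : H}
    (hx : x + J x ≠ 0) : kform J₀ (x + J x) x ≠ 0 := by
  intro h
  have hsq : kform J₀ (x + J x) (x + J x) = 2 * kform J₀ (x + J x) x := by
    rw [kform_add_right_s8, ← hJ.2.1, hJ.apply_add_apply_self]
    ring
  exact (hJ.kform_self_pos (hJ.apply_add_apply_self x) hx).ne' (by rw [hsq, h, mul_zero])

lemma kform_sub_apply_self_ne_zero (hJ : IsFundamentalSymmetry J₀ J) {x : H}
    (hx : x - J x ≠ 0) : kform J₀ (x - J x) x ≠ 0 := by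
  intro h
  have hsq : kform J₀ (x - J x) (x - J x) = 2 * kform J₀ (x - J x) x := by
    rw [kform_sub_right, ← hJ.2.1, hJ.apply_sub_apply_self, kform_neg_left]
    ring
  exact (hJ.kform_self_neg (hJ.apply_sub_apply_self x) hx).ne (by rw [hsq, h, mul_zero])

lemma conj (hsa : ∀ x y : H, (inner ℂ (J₀ x) y : ℂ) = inner ℂ x (J₀ y))
    (hJ : IsFundamentalSymmetry J₀ J) {M M' : H →L[ℂ] H} (hMM' : ∀ u, M (M' u) = u)
    (hM'M : ∀ u, M' (M u) = u) (hadj : ∀ a b, kform J₀ (M a) b = kform J₀ a (M' b)) :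
    IsFundamentalSymmetry J₀ (M ∘L J ∘L M') := by
  have hadj' : ∀ a b, kform J₀ (M' a) b = kform J₀ a (M b) := fun a b => by
    rw [← kform_conj_symm hsa, ← hadj, kform_conj_symm hsa]
  refine ⟨fun u => ?_, fun a b => ?_, fun u hu => ?_⟩
  · simp only [ContinuousLinearMap.comp_apply, hM'M, hJ.1, hMM']
  · simp only [ContinuousLinearMap.comp_apply, hadj, hJ.2.1, hadj']
  · simp only [ContinuousLinearMap.comp_apply, hadj]
    exact hJ.2.2 _ fun h => hu (by rw [← hMM' u, h, map_zero])

end IsFundamentalSymmetry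

lemma exists_add_cosh_sub_one_mul_add_sinh_mul_eq {a c K B : ℝ} (hK : 0 < K) (hac : a ≤ c) :
    ∃ s, a + (Real.cosh s - 1) * K + Real.sinh s * B = c := by
  set f : ℝ → ℝ := fun s => a + (Real.cosh s - 1) * K + Real.sinh s * B
  set t := Real.arcosh (1 + (c - a) / K)
  have hcosh : (Real.cosh t - 1) * K = c - a := by
    rw [Real.cosh_arcosh (by linarith [div_nonneg (sub_nonneg.2 hac) hK.le])]
    field_simp
    ring
  -- `f t + f (-t) = 2 c` by the choice of `t`
  obtain ⟨b, hb⟩ : ∃ b, c ≤ f b := by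
    by_contra! h
    have := add_lt_add (h t) (h (-t))
    simp only [f, Real.cosh_neg, Real.sinh_neg] at this
    linarith
  exact intermediate_value_univ 0 b (by fun_prop) ⟨by simpa [f] using hac, hb⟩

section HyperbolicRotation

variable {H : Type*} [NormedAddCommGroup H] [InnerProductSpace ℂ H] {J₀ J : H →L[ℂ] H}

structure IsHyperbolicPair_s8 (J₀ J : H →L[ℂ] H) (p n : H) : Prop where
  apply_fst : J p = p
  apply_snd : J n = -n
  kform_fst : kform J₀ p p = 1
  kform_snd : kform J₀ n n = -1

lemma IsHyperbolicPair_s8.kform_fst_snd {p n : H} (hJ : IsFundamentalSymmetry J₀ J)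
    (h : IsHyperbolicPair_s8 J₀ J p n) : kform J₀ p n = 0 := by
  have := hJ.2.1 p n
  rw [h.apply_fst, h.apply_snd, kform_neg_right] at this
  linear_combination this / 2

lemma IsHyperbolicPair_s8.kform_snd_fst {p n : H} (hJ : IsFundamentalSymmetry J₀ J)
    (h : IsHyperbolicPair_s8 J₀ J p n) : kform J₀ n p = 0 := by
  have := hJ.2.1 n p
  rw [h.apply_fst, h.apply_snd, kform_neg_left] at this
  linear_combination -this / 2

/-- In the basis `(p, n)` it acts as `[[cosh t, sinh t], [sinh t, cosh t]]`, and as the identity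
on the `[·,·]`-orthogonal complement of `span {p, n}`. -/
noncomputable def hyperbolicRotation (J₀ : H →L[ℂ] H) (p n : H) (t : ℝ) : H →L[ℂ] H :=
  ContinuousLinearMap.id ℂ H
  + ((Real.cosh t : ℂ) - 1) • ((innerSL ℂ (J₀ p)).smulRight p - (innerSL ℂ (J₀ n)).smulRight n)
  + (Real.sinh t : ℂ) • ((innerSL ℂ (J₀ p)).smulRight n - (innerSL ℂ (J₀ n)).smulRight p)

lemma hyperbolicRotation_apply (p n : H) (t : ℝ) (u : H) :
    hyperbolicRotation J₀ p n t u
      = u + ((Real.cosh t : ℂ) - 1) • (kform J₀ p u • p - kform J₀ n u • n)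
          + (Real.sinh t : ℂ) • (kform J₀ p u • n - kform J₀ n u • p) := by
  simp [hyperbolicRotation, kform]

lemma hyperbolicRotation_zero (p n u : H) : hyperbolicRotation J₀ p n 0 u = u := by
  simp [hyperbolicRotation_apply]

lemma IsHyperbolicPair_s8.hyperbolicRotation_hyperbolicRotation {p n : H}
    (hJ : IsFundamentalSymmetry J₀ J) (h : IsHyperbolicPair_s8 J₀ J p n) (s t : ℝ) (u : H) :
    hyperbolicRotation J₀ p n s (hyperbolicRotation J₀ p n t u)
      = hyperbolicRotation J₀ p n (s + t) u := by
  simp only [hyperbolicRotation_apply, kform_add_right_s8, kform_sub_right, kform_smul_right_s8,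
    h.kform_fst, h.kform_snd, h.kform_fst_snd hJ, h.kform_snd_fst hJ, Real.cosh_add,
    Real.sinh_add]
  match_scalars <;> ring

lemma kform_hyperbolicRotation_left (hsa : ∀ x y : H, (inner ℂ (J₀ x) y : ℂ) = inner ℂ x (J₀ y))
    (p n : H) (t : ℝ) (a b : H) :
    kform J₀ (hyperbolicRotation J₀ p n t a) b
      = kform J₀ a (hyperbolicRotation J₀ p n (-t) b) := by
  simp only [hyperbolicRotation_apply, kform_add_left_s8, kform_sub_left, kform_smul_left_s8,
    kform_add_right_s8, kform_sub_right, kform_smul_right_s8, map_sub, map_one,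
    Complex.conj_ofReal, kform_conj_symm hsa, Real.cosh_neg, Real.sinh_neg, Complex.ofReal_neg]
  ring

lemma IsHyperbolicPair_s8.apply_hyperbolicRotation {p n : H} (hJ : IsFundamentalSymmetry J₀ J)
    (h : IsHyperbolicPair_s8 J₀ J p n) (t : ℝ) (u : H) :
    J (hyperbolicRotation J₀ p n t u) = hyperbolicRotation J₀ p n (-t) (J u) := by
  have hpu : kform J₀ p (J u) = kform J₀ p u := by rw [← hJ.2.1, h.apply_fst]
  have hnu : kform J₀ n (J u) = -kform J₀ n u := by rw [← hJ.2.1, h.apply_snd, kform_neg_left]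
  simp only [hyperbolicRotation_apply, map_add, map_smul, map_sub, h.apply_fst, h.apply_snd,
    hpu, hnu, Real.cosh_neg, Real.sinh_neg, Complex.ofReal_neg]
  match_scalars <;> ring

lemma IsHyperbolicPair_s8.re_kform_hyperbolicRotation_apply {p n : H}
    (hJ : IsFundamentalSymmetry J₀ J) (h : IsHyperbolicPair_s8 J₀ J p n) (s : ℝ) (x : H) :
    (kform J₀ (hyperbolicRotation J₀ p n s (J x)) x).re
      = (kform J₀ (J x) x).re
        + (Real.cosh s - 1) * (Complex.normSq (kform J₀ p x) + Complex.normSq (kform J₀ n x))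
        + Real.sinh s * (2 * ((starRingEnd ℂ) (kform J₀ p x) * kform J₀ n x).re) := by
  have hpx : kform J₀ p (J x) = kform J₀ p x := by rw [← hJ.2.1, h.apply_fst]
  have hnx : kform J₀ n (J x) = -kform J₀ n x := by rw [← hJ.2.1, h.apply_snd, kform_neg_left]
  simp only [hyperbolicRotation_apply, kform_add_left_s8, kform_sub_left, kform_smul_left_s8, hpx, hnx,
    map_sub, map_neg, map_one, Complex.conj_ofReal]
  simp only [Complex.add_re, Complex.sub_re, Complex.mul_re, Complex.mul_im, Complex.sub_im,
    Complex.neg_re, Complex.neg_im, Complex.ofReal_re, Complex.ofReal_im, Complex.one_re,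
    Complex.one_im, Complex.conj_re, Complex.conj_im, Complex.normSq_apply]
  ring

lemma IsHyperbolicPair_s8.exists_isFundamentalSymmetry_jnorm_eq
    (hsa : ∀ x y : H, (inner ℂ (J₀ x) y : ℂ) = inner ℂ x (J₀ y))
    (hJ : IsFundamentalSymmetry J₀ J) {p n : H} (h : IsHyperbolicPair_s8 J₀ J p n) {x : H}
    (hx : kform J₀ p x ≠ 0 ∨ kform J₀ n x ≠ 0) {c : ℝ} (hc : jnorm J₀ J x ≤ c) :
    ∃ J' : H →L[ℂ] H, IsFundamentalSymmetry J₀ J' ∧ jnorm J₀ J' x = c := by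
  set R := hyperbolicRotation J₀ p n
  have hK : 0 < Complex.normSq (kform J₀ p x) + Complex.normSq (kform J₀ n x) := by
    rcases hx with hx | hx
    · exact add_pos_of_pos_of_nonneg (Complex.normSq_pos.2 hx) (Complex.normSq_nonneg _)
    · exact add_pos_of_nonneg_of_pos (Complex.normSq_nonneg _) (Complex.normSq_pos.2 hx)
  have hc0 : 0 ≤ c := (Real.sqrt_nonneg _).trans hc
  have hac : (kform J₀ (J x) x).re ≤ c ^ 2 := by
    rw [← Real.sq_sqrt (hJ.re_kform_apply_self_nonneg x)]
    exact pow_le_pow_left₀ (Real.sqrt_nonneg _) hc 2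
  obtain ⟨s, hs⟩ := exists_add_cosh_sub_one_mul_add_sinh_mul_eq
    (B := 2 * ((starRingEnd ℂ) (kform J₀ p x) * kform J₀ n x).re) hK hac
  have hRR : ∀ t u, R t (R (-t) u) = u := fun t u => by
    rw [h.hyperbolicRotation_hyperbolicRotation hJ, add_neg_cancel, hyperbolicRotation_zero]
  refine ⟨R (s / 2) ∘L J ∘L R (-(s / 2)),
    hJ.conj hsa (hRR _) (by simpa using hRR (-(s / 2))) (kform_hyperbolicRotation_left hsa p n _),
    ?_⟩
  have hJ'x : (R (s / 2) ∘L J ∘L R (-(s / 2))) x = R s (J x) := by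
    rw [ContinuousLinearMap.comp_apply, ContinuousLinearMap.comp_apply,
      h.apply_hyperbolicRotation hJ, neg_neg, h.hyperbolicRotation_hyperbolicRotation hJ,
      add_halves]
  rw [jnorm, hJ'x, h.re_kform_hyperbolicRotation_apply hJ, hs, Real.sqrt_sq hc0]

lemma IsFundamentalSymmetry.exists_isHyperbolicPair_smul (hJ : IsFundamentalSymmetry J₀ J)
    {y z : H} (hy : J y = y) (hy0 : y ≠ 0) (hz : J z = -z) (hz0 : z ≠ 0) :
    ∃ t r : ℝ, t ≠ 0 ∧ r ≠ 0 ∧ IsHyperbolicPair_s8 J₀ J ((t : ℂ) • y) ((r : ℂ) • z) := by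
  obtain ⟨t, ht, hty⟩ := exists_kform_ofReal_smul_self_eq_one (hJ.kform_self_pos hy hy0)
  obtain ⟨r, hr, hrz⟩ := exists_kform_ofReal_smul_self_eq_neg_one (hJ.kform_self_neg hz hz0)
  exact ⟨t, r, ht, hr, by rw [map_smul, hy], by rw [map_smul, hz, smul_neg], hty, hrz⟩

lemma IsFundamentalSymmetry.exists_isHyperbolicPair_s8 (hJ : IsFundamentalSymmetry J₀ J)
    (hindef : ∃ u v : H, 0 < kform J₀ u u ∧ kform J₀ v v < 0) {x : H} (hx : x ≠ 0) :
    ∃ p n, IsHyperbolicPair_s8 J₀ J p n ∧ (kform J₀ p x ≠ 0 ∨ kform J₀ n x ≠ 0) := by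
  obtain ⟨u, v, hu, hv⟩ := hindef
  have hx' : x + J x ≠ 0 ∨ x - J x ≠ 0 := by
    by_contra! h
    have h2x : (2 : ℂ) • x = 0 := calc
      (2 : ℂ) • x = (x + J x) + (x - J x) := by rw [two_smul]; abel
      _ = 0 := by rw [h.1, h.2, add_zero]
    exact hx (by simpa using h2x)
  rcases hx' with hxp | hxn
  · obtain ⟨t, _, ht, -, hpair⟩ := hJ.exists_isHyperbolicPair_smul (hJ.apply_add_apply_self x)
      hxp (hJ.apply_sub_apply_self v) (hJ.sub_apply_self_ne_zero hv)
    refine ⟨_, _, hpair, Or.inl ?_⟩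
    rw [kform_smul_left_s8, Complex.conj_ofReal]
    exact mul_ne_zero (by exact_mod_cast ht) (hJ.kform_add_apply_self_ne_zero hxp)
  · obtain ⟨_, r, -, hr, hpair⟩ := hJ.exists_isHyperbolicPair_smul (hJ.apply_add_apply_self u)
      (hJ.add_apply_self_ne_zero hu) (hJ.apply_sub_apply_self x) hxn
    refine ⟨_, _, hpair, Or.inr ?_⟩
    rw [kform_smul_left_s8, Complex.conj_ofReal]
    exact mul_ne_zero (by exact_mod_cast hr) (hJ.kform_sub_apply_self_ne_zero hxn)

end HyperbolicRotation

theorem exists_fundamentalSymmetry_jnorm_between_general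
    {H : Type*} [NormedAddCommGroup H] [InnerProductSpace ℂ H]
    (J₀ : H →L[ℂ] H)
    (hsa : ∀ x y : H, (inner ℂ (J₀ x) y : ℂ) = inner ℂ x (J₀ y))
    (hindef : ∃ u v : H, 0 < kform J₀ u u ∧ kform J₀ v v < 0)
    (x : H) (hx0 : x ≠ 0)
    (J₁ J₂ : H →L[ℂ] H) (hJ₁ : IsFundamentalSymmetry J₀ J₁)
    (hlt : jnorm J₀ J₁ x < jnorm J₀ J₂ x) :
    ∃ J : H →L[ℂ] H, IsFundamentalSymmetry J₀ J ∧
      jnorm J₀ J₁ x < jnorm J₀ J x ∧ jnorm J₀ J x < jnorm J₀ J₂ x := by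
  obtain ⟨p, n, hpair, hx⟩ := hJ₁.exists_isHyperbolicPair_s8 hindef hx0
  obtain ⟨J, hJ, hJx⟩ := hpair.exists_isFundamentalSymmetry_jnorm_eq hsa hJ₁ hx
    (c := (jnorm J₀ J₁ x + jnorm J₀ J₂ x) / 2) (by linarith)
  exact ⟨J, hJ, by linarith, by linarith⟩

theorem exists_fundamentalSymmetry_jnorm_between
    {H : Type*} [NormedAddCommGroup H] [InnerProductSpace ℂ H] [CompleteSpace H]
    (J₀ : H →L[ℂ] H)
    (hinv : ∀ x, J₀ (J₀ x) = x)
    (hsa : ∀ x y : H, (inner ℂ (J₀ x) y : ℂ) = inner ℂ x (J₀ y))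
    (hindef : ∃ u v : H, 0 < kform J₀ u u ∧ kform J₀ v v < 0)
    (x : H) (hx0 : x ≠ 0)
    (J₁ J₂ : H →L[ℂ] H) (hJ₁ : IsFundamentalSymmetry J₀ J₁) (hJ₂ : IsFundamentalSymmetry J₀ J₂)
    (hlt : jnorm J₀ J₁ x < jnorm J₀ J₂ x) :
    ∃ J : H →L[ℂ] H, IsFundamentalSymmetry J₀ J ∧
      jnorm J₀ J₁ x < jnorm J₀ J x ∧ jnorm J₀ J x < jnorm J₀ J₂ x :=
  exists_fundamentalSymmetry_jnorm_between_general J₀ hsa hindef x hx0 J₁ J₂ hJ₁ hlt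
end

section
/- Let x ∈ H be a nonzero neutral element (x ≠ 0, [x, x] = 0) and let α ∈ ℂ. Then for every ε > 0 there exists a fundamental symmetry J of (H, [·,·]) such that |‖x‖_J − ‖α • x‖_J| < ε. -/
open scoped ComplexOrder

/-! Normalise `x` to a unit vector `e`; neutrality of `e` makes `e, J₀ e` orthonormal. Let `S_t`
scale `e` by `t`, `J₀ e` by `t⁻¹` and fix their orthogonal complement. It is symmetric and positive
definite, and since `J₀` swaps `e` and `J₀ e` we get `J₀ S_t J₀ = S_t⁻¹`; hence `J₀ S_t` is a
fundamental symmetry with `[J₀ S_t y, y] = ⟪S_t y, y⟫`. For it `‖x‖_J = √t ‖x‖` and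
`‖α x‖_J = |α| √t ‖x‖`, whose difference tends to `0` with `t`. -/

open scoped InnerProductSpace
open InnerProductSpace (rankOne)

section

variable {H : Type*} [NormedAddCommGroup H] [InnerProductSpace ℂ H] {J₀ : H →L[ℂ] H}

lemma norm_map_of_involutive_of_symm (hinv : ∀ x, J₀ (J₀ x) = x)
    (hsa : ∀ x y : H, ⟪J₀ x, y⟫_ℂ = ⟪x, J₀ y⟫_ℂ) (x : H) : ‖J₀ x‖ = ‖x‖ := by
  rw [← sq_eq_sq₀ (norm_nonneg _) (norm_nonneg _), ← inner_self_eq_norm_sq (𝕜 := ℂ),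
    ← inner_self_eq_norm_sq (𝕜 := ℂ), hsa, hinv]

lemma orthonormal_pair_of_neutral (hinv : ∀ x, J₀ (J₀ x) = x)
    (hsa : ∀ x y : H, ⟪J₀ x, y⟫_ℂ = ⟪x, J₀ y⟫_ℂ) {e : H} (he : ‖e‖ = 1)
    (hne : kform J₀ e e = 0) : Orthonormal ℂ ![e, J₀ e] := by
  simpa [he, norm_map_of_involutive_of_symm hinv hsa, ← hsa, kform] using hne

lemma kform_smul_smul (J₀ : H →L[ℂ] H) (α : ℂ) (x y : H) :
    kform J₀ (α • x) (α • y) = (‖α‖ ^ 2 : ℝ) * kform J₀ x y := by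
  simp only [kform, map_smul, inner_smul_left, inner_smul_right, ← mul_assoc, Complex.mul_conj']
  push_cast
  ring

lemma jnorm_smul (J₀ J : H →L[ℂ] H) (α : ℂ) (x : H) :
    jnorm J₀ J (α • x) = ‖α‖ * jnorm J₀ J x := by
  rw [jnorm, jnorm, map_smul, kform_smul_smul, Complex.re_ofReal_mul,
    Real.sqrt_mul (by positivity), Real.sqrt_sq (norm_nonneg α)]

lemma kform_comp_apply (hinv : ∀ x, J₀ (J₀ x) = x) (S : H →L[ℂ] H) (x y : H) :
    kform J₀ ((J₀ ∘L S) x) y = ⟪S x, y⟫_ℂ := by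
  simp [kform, hinv]

lemma isFundamentalSymmetry_comp (hinv : ∀ x, J₀ (J₀ x) = x)
    (hsa : ∀ x y : H, ⟪J₀ x, y⟫_ℂ = ⟪x, J₀ y⟫_ℂ) {S : H →L[ℂ] H}
    (hS : ∀ x, J₀ (S (J₀ (S x))) = x) (hS_symm : (S : H →ₗ[ℂ] H).IsSymmetric)
    (hS_pos : ∀ x, x ≠ 0 → 0 < ⟪S x, x⟫_ℂ) :
    IsFundamentalSymmetry J₀ (J₀ ∘L S) := by
  refine ⟨hS, fun x y => ?_, fun x hx => kform_comp_apply hinv S x x ▸ hS_pos x hx⟩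
  rw [kform_comp_apply hinv, kform, hsa, ContinuousLinearMap.comp_apply, hinv]
  exact hS_symm x y

noncomputable def squeezeMap (e f : H) (t : ℝ) : H →L[ℂ] H :=
  1 + ((t : ℂ) - 1) • rankOne ℂ e e + ((t : ℂ)⁻¹ - 1) • rankOne ℂ f f

variable {e f : H} {t : ℝ}

lemma squeezeMap_apply (x : H) :
    squeezeMap e f t x =
      x + (((t : ℂ) - 1) * ⟪e, x⟫_ℂ) • e + (((t : ℂ)⁻¹ - 1) * ⟪f, x⟫_ℂ) • f := by
  simp [squeezeMap, smul_smul]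

lemma squeezeMap_swap : squeezeMap f e t = squeezeMap e f t⁻¹ := by
  simp only [squeezeMap, Complex.ofReal_inv, inv_inv, add_assoc, add_comm (_ • rankOne ℂ f f)]

lemma isSymmetric_squeezeMap : (squeezeMap e f t : H →ₗ[ℂ] H).IsSymmetric := by
  intro x y
  simp only [ContinuousLinearMap.coe_coe, squeezeMap_apply, inner_add_left, inner_add_right,
    inner_smul_left, inner_smul_right, map_mul, map_sub, map_inv₀, Complex.conj_ofReal, map_one,
    inner_conj_symm]
  ring

lemma inner_squeezeMap_apply_self (x : H) :
    ⟪squeezeMap e f t x, x⟫_ℂ =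
      ((‖x‖ ^ 2 + (t - 1) * ‖⟪e, x⟫_ℂ‖ ^ 2 + (t⁻¹ - 1) * ‖⟪f, x⟫_ℂ‖ ^ 2 : ℝ) : ℂ) := by
  simp only [squeezeMap_apply, inner_add_left, inner_smul_left, map_mul, map_sub, map_inv₀,
    Complex.conj_ofReal, map_one, mul_assoc, Complex.conj_mul']
  have hx : ⟪x, x⟫_ℂ = (‖x‖ : ℂ) ^ 2 := inner_self_eq_norm_sq_to_K x
  push_cast [hx]
  ring

lemma squeezeMap_apply_left (hef : Orthonormal ℂ ![e, f]) :
    squeezeMap e f t e = (t : ℂ) • e := by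
  have he : ‖e‖ = 1 := hef.1 0
  have horth : ⟪f, e⟫_ℂ = 0 := hef.2 (by decide : (1 : Fin 2) ≠ 0)
  rw [squeezeMap_apply, inner_self_eq_norm_sq_to_K, he, horth]
  module

lemma squeezeMap_apply_right (hef : Orthonormal ℂ ![e, f]) :
    squeezeMap e f t f = (t : ℂ)⁻¹ • f := by
  have hf : ‖f‖ = 1 := hef.1 1
  have horth : ⟪e, f⟫_ℂ = 0 := hef.2 (by decide : (0 : Fin 2) ≠ 1)
  rw [squeezeMap_apply, inner_self_eq_norm_sq_to_K, hf, horth]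
  module

lemma squeezeMap_inv_apply_apply (hef : Orthonormal ℂ ![e, f]) (ht : t ≠ 0) (x : H) :
    squeezeMap e f t⁻¹ (squeezeMap e f t x) = x := by
  have hSe : ⟪e, squeezeMap e f t x⟫_ℂ = t * ⟪e, x⟫_ℂ := by
    have := (isSymmetric_squeezeMap (e := e) (f := f) (t := t) e x).symm
    rwa [ContinuousLinearMap.coe_coe, squeezeMap_apply_left hef, inner_smul_left,
      Complex.conj_ofReal] at this
  have hSf : ⟪f, squeezeMap e f t x⟫_ℂ = (t : ℂ)⁻¹ * ⟪f, x⟫_ℂ := by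
    have := (isSymmetric_squeezeMap (e := e) (f := f) (t := t) f x).symm
    rwa [ContinuousLinearMap.coe_coe, squeezeMap_apply_right hef, inner_smul_left, map_inv₀,
      Complex.conj_ofReal] at this
  have htc : (t : ℂ) ≠ 0 := by exact_mod_cast ht
  rw [squeezeMap_apply, hSe, hSf, squeezeMap_apply]
  push_cast
  rw [inv_inv]
  match_scalars <;> field_simp <;> ring

lemma inner_squeezeMap_apply_self_pos (hef : Orthonormal ℂ ![e, f]) (ht : 0 < t) {x : H}
    (hx : x ≠ 0) :
    0 < ⟪squeezeMap e f t x, x⟫_ℂ := by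
  have hbessel : ‖⟪e, x⟫_ℂ‖ ^ 2 + ‖⟪f, x⟫_ℂ‖ ^ 2 ≤ ‖x‖ ^ 2 := by
    simpa [Fin.sum_univ_two] using hef.sum_inner_products_le x (s := Finset.univ)
  have hx : 0 < ‖x‖ ^ 2 := by positivity
  rw [inner_squeezeMap_apply_self, Complex.zero_lt_real]
  have hA := sq_nonneg ‖⟪e, x⟫_ℂ‖
  have hB := sq_nonneg ‖⟪f, x⟫_ℂ‖
  rcases le_total t 1 with h | h
  · have : 1 ≤ t⁻¹ := (one_le_inv₀ ht).mpr h
    nlinarith [mul_nonneg (sub_nonneg.2 h) (by linarith : 0 ≤ ‖x‖ ^ 2 - ‖⟪e, x⟫_ℂ‖ ^ 2)]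
  · have : t⁻¹ ≤ 1 := inv_le_one_of_one_le₀ h
    nlinarith [mul_nonneg (sub_nonneg.2 this) (by linarith : 0 ≤ ‖x‖ ^ 2 - ‖⟪f, x⟫_ℂ‖ ^ 2),
      inv_pos.mpr ht]

lemma apply_squeezeMap_apply (hinv : ∀ x, J₀ (J₀ x) = x)
    (hsa : ∀ x y : H, ⟪J₀ x, y⟫_ℂ = ⟪x, J₀ y⟫_ℂ) (e f : H) (t : ℝ) (x : H) :
    J₀ (squeezeMap e f t (J₀ x)) = squeezeMap (J₀ e) (J₀ f) t x := by
  simp only [squeezeMap_apply, map_add, map_smul, hinv, ← hsa]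

lemma isFundamentalSymmetry_comp_squeezeMap (hinv : ∀ x, J₀ (J₀ x) = x)
    (hsa : ∀ x y : H, ⟪J₀ x, y⟫_ℂ = ⟪x, J₀ y⟫_ℂ) {e : H} (he : ‖e‖ = 1)
    (hne : kform J₀ e e = 0) {t : ℝ} (ht : 0 < t) :
    IsFundamentalSymmetry J₀ (J₀ ∘L squeezeMap e (J₀ e) t) := by
  have hef := orthonormal_pair_of_neutral hinv hsa he hne
  refine isFundamentalSymmetry_comp hinv hsa (fun x => ?_) isSymmetric_squeezeMap
    (fun x hx => inner_squeezeMap_apply_self_pos hef ht hx)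
  rw [apply_squeezeMap_apply hinv hsa, hinv, squeezeMap_swap,
    squeezeMap_inv_apply_apply hef ht.ne']

lemma jnorm_comp_squeezeMap_left (hinv : ∀ x, J₀ (J₀ x) = x) {e f : H}
    (hef : Orthonormal ℂ ![e, f]) (t : ℝ) :
    jnorm J₀ (J₀ ∘L squeezeMap e f t) e = √t := by
  have he : ‖e‖ = 1 := hef.1 0
  rw [jnorm, kform_comp_apply hinv, squeezeMap_apply_left hef, inner_smul_left,
    inner_self_eq_norm_sq_to_K, he]
  simp

end

theorem exists_fundamentalSymmetry_jnorm_sub_smul_lt_of_neutral_general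
    {H : Type*} [NormedAddCommGroup H] [InnerProductSpace ℂ H]
    (J₀ : H →L[ℂ] H)
    (hinv : ∀ x, J₀ (J₀ x) = x)
    (hsa : ∀ x y : H, (inner ℂ (J₀ x) y : ℂ) = inner ℂ x (J₀ y))
    (x : H) (hx0 : x ≠ 0) (hx : kform J₀ x x = 0) (α : ℂ)
    (ε : ℝ) (hε : 0 < ε) :
    ∃ J : H →L[ℂ] H, IsFundamentalSymmetry J₀ J ∧
      |jnorm J₀ J x - jnorm J₀ J (α • x)| < ε := by
  obtain ⟨δ, hδ, hδε⟩ := exists_pos_mul_lt hε (|1 - ‖α‖| * ‖x‖)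
  set e : H := (‖x‖⁻¹ : ℂ) • x
  have he : ‖e‖ = 1 := norm_smul_inv_norm hx0
  have hne : kform J₀ e e = 0 := by rw [kform_smul_smul, hx, mul_zero]
  have hxe : x = (‖x‖ : ℂ) • e := by simp [e, smul_smul, hx0]
  set J := J₀ ∘L squeezeMap e (J₀ e) (δ ^ 2)
  have hJx : jnorm J₀ J x = ‖x‖ * δ := by
    conv_lhs => rw [hxe]
    rw [jnorm_smul,
      jnorm_comp_squeezeMap_left hinv (orthonormal_pair_of_neutral hinv hsa he hne),
      Real.sqrt_sq hδ.le, Complex.norm_real, norm_norm]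
  refine ⟨J, isFundamentalSymmetry_comp_squeezeMap hinv hsa he hne (by positivity), ?_⟩
  calc |jnorm J₀ J x - jnorm J₀ J (α • x)|
      = |1 - ‖α‖| * ‖x‖ * δ := by
        rw [jnorm_smul, hJx, ← one_sub_mul, abs_mul,
          abs_of_nonneg (by positivity : 0 ≤ ‖x‖ * δ), mul_assoc]
    _ < ε := hδε

theorem exists_fundamentalSymmetry_jnorm_sub_smul_lt_of_neutral
    {H : Type*} [NormedAddCommGroup H] [InnerProductSpace ℂ H] [CompleteSpace H]
    (J₀ : H →L[ℂ] H)
    (hinv : ∀ x, J₀ (J₀ x) = x)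
    (hsa : ∀ x y : H, (inner ℂ (J₀ x) y : ℂ) = inner ℂ x (J₀ y))
    (x : H) (hx0 : x ≠ 0) (hx : kform J₀ x x = 0) (α : ℂ)
    (ε : ℝ) (hε : 0 < ε) :
    ∃ J : H →L[ℂ] H, IsFundamentalSymmetry J₀ J ∧
      |jnorm J₀ J x - jnorm J₀ J (α • x)| < ε :=
  exists_fundamentalSymmetry_jnorm_sub_smul_lt_of_neutral_general J₀ hinv hsa x hx0 hx α ε hε
end
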